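/- Suppose X ∈ ℝ^{n×p} with ‖X^T X - I_p‖_F ≤ 1/6, and let X_+ = A(X) - η G, where A(X) = (1/8)X(15 I_p - 10 X^T X + 3(X^T X)^2), ‖G‖_F ≤ M, and 0 < η ≤ 1/(19M). Then ‖X_+^T X_+ - I_p‖_F ≤ (1/36)‖X^T X - I_p‖_F + 3ηM, and consequently ‖X_+^T X_+ - I_p‖_F ≤ 1/6. -/

import Mathlib

/-!
Write `E = XᵀX - 1` and `P(E) = 1 - E/2 + 3E²/8`, the quadratic Taylor polynomial of
`(1 + E) ^ (-1/2)`. Then `A(X) = X P(E)`, so `A(X)ᵀA(X) - 1 = P(E)(1 + E)P(E) - 1` is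
`(5/8)E³ - (15/64)E⁴ + (9/64)E⁵`, whose Frobenius norm is at most `‖E‖³ ≤ ‖E‖/36`.
The step `-ηG` moves the Gram matrix by at most `2η‖A(X)ᵀG‖ + η²‖G‖²`, and
`‖A(X)ᵀG‖ ≤ (35/32)‖XᵀG‖ ≤ (35/32)(13/12)‖G‖`: the last bound holds because
`‖XU‖² = ‖U‖² + tr(UᵀEU) ≤ (7/6)‖U‖²`, and by duality the same bound holds for `Xᵀ`.
-/

open Matrix

/-- Frobenius norm of a real matrix. -/
noncomputable def frob {m n : ℕ} (X : Matrix (Fin m) (Fin n) ℝ) : ℝ :=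
  Real.sqrt (∑ i, ∑ j, (X i j) ^ 2)

/-- The constraint dissolving mapping `A(X) = (1/8) X (15 Iₚ - 10 XᵀX + 3 (XᵀX)²)`. -/
noncomputable def cdMap {n p : ℕ} (X : Matrix (Fin n) (Fin p) ℝ) : Matrix (Fin n) (Fin p) ℝ :=
  (1 / 8 : ℝ) • (X * ((15 : ℝ) • (1 : Matrix (Fin p) (Fin p) ℝ)
    - (10 : ℝ) • (Xᵀ * X) + (3 : ℝ) • (Xᵀ * X) ^ 2))

attribute [local instance] Matrix.frobeniusSeminormedAddCommGroup
  Matrix.frobeniusNormedSpace Matrix.frobeniusNormedRing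

lemma frob_eq_norm {m n : ℕ} (X : Matrix (Fin m) (Fin n) ℝ) : frob X = ‖X‖ := by
  rw [frob, frobenius_norm_def, ← Real.sqrt_eq_rpow]
  simp

namespace Matrix

section Frobenius

variable {l m n : Type*} [Fintype l] [Fintype m] [Fintype n]

/-- The Frobenius norm is by definition the norm of this vector of a Hilbert space. -/
def frobeniusToLp (A : Matrix m n ℝ) : PiLp 2 fun _ : m ↦ EuclideanSpace ℝ n :=
  WithLp.toLp 2 fun i ↦ WithLp.toLp 2 (A i)

lemma norm_frobeniusToLp (A : Matrix m n ℝ) : ‖frobeniusToLp A‖ = ‖A‖ := rfl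

lemma trace_transpose_mul_eq_inner (A B : Matrix m n ℝ) :
    (Aᵀ * B).trace = inner ℝ (frobeniusToLp A) (frobeniusToLp B) := by
  simp [frobeniusToLp, PiLp.inner_apply, trace, mul_apply, Finset.sum_comm (γ := n), mul_comm]

lemma trace_transpose_mul_self (A : Matrix m n ℝ) : (Aᵀ * A).trace = ‖A‖ ^ 2 := by
  rw [trace_transpose_mul_eq_inner, real_inner_self_eq_norm_sq, norm_frobeniusToLp]

lemma trace_transpose_mul_le (A B : Matrix m n ℝ) : (Aᵀ * B).trace ≤ ‖A‖ * ‖B‖ := by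
  rw [trace_transpose_mul_eq_inner, ← norm_frobeniusToLp, ← norm_frobeniusToLp]
  exact real_inner_le_norm _ _

lemma norm_transpose_mul_self_le (A : Matrix m n ℝ) : ‖Aᵀ * A‖ ≤ ‖A‖ ^ 2 := by
  simpa [frobenius_norm_transpose, sq] using frobenius_norm_mul Aᵀ A

variable [DecidableEq m]

lemma norm_mul_sq_le (X : Matrix l m ℝ) (U : Matrix m n ℝ) :
    ‖X * U‖ ^ 2 ≤ (1 + ‖Xᵀ * X - 1‖) * ‖U‖ ^ 2 := by
  have hgram : (X * U)ᵀ * (X * U) = Uᵀ * U + Uᵀ * ((Xᵀ * X - 1) * U) := by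
    rw [transpose_mul, Matrix.sub_mul, Matrix.mul_sub, Matrix.one_mul, Matrix.mul_assoc,
      ← Matrix.mul_assoc Xᵀ]
    abel
  calc ‖X * U‖ ^ 2 = ‖U‖ ^ 2 + (Uᵀ * ((Xᵀ * X - 1) * U)).trace := by
        rw [← trace_transpose_mul_self, hgram, trace_add, trace_transpose_mul_self]
    _ ≤ ‖U‖ ^ 2 + ‖U‖ * (‖Xᵀ * X - 1‖ * ‖U‖) := by
        gcongr
        exact (trace_transpose_mul_le _ _).trans
          (mul_le_mul_of_nonneg_left (frobenius_norm_mul _ _) (norm_nonneg U))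
    _ = (1 + ‖Xᵀ * X - 1‖) * ‖U‖ ^ 2 := by ring

lemma norm_transpose_mul_sq_le (X : Matrix l m ℝ) (G : Matrix l n ℝ) :
    ‖Xᵀ * G‖ ^ 2 ≤ (1 + ‖Xᵀ * X - 1‖) * ‖G‖ ^ 2 := by
  set U := Xᵀ * G
  -- duality: `‖U‖ ^ 2 = tr ((X * U)ᵀ * G)`
  have hU : ‖U‖ ^ 2 ≤ ‖X * U‖ * ‖G‖ := by
    rw [← trace_transpose_mul_self]
    simpa [U, transpose_mul, Matrix.mul_assoc] using trace_transpose_mul_le (X * U) G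
  have hU4 : ‖U‖ ^ 2 * ‖U‖ ^ 2 ≤ ‖U‖ ^ 2 * ((1 + ‖Xᵀ * X - 1‖) * ‖G‖ ^ 2) :=
    calc ‖U‖ ^ 2 * ‖U‖ ^ 2 ≤ (‖X * U‖ * ‖G‖) ^ 2 := by
          rw [← sq]; exact pow_le_pow_left₀ (by positivity) hU 2
      _ = ‖X * U‖ ^ 2 * ‖G‖ ^ 2 := by ring
      _ ≤ (1 + ‖Xᵀ * X - 1‖) * ‖U‖ ^ 2 * ‖G‖ ^ 2 := by gcongr; exact norm_mul_sq_le X U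
      _ = _ := by ring
  rcases (sq_nonneg ‖U‖).eq_or_lt with h0 | hpos
  · rw [← h0]
    positivity
  · exact le_of_mul_le_mul_left hU4 hpos

end Frobenius

section InvSqrtApprox

variable {m n : Type*} [Fintype m] [Fintype n] [DecidableEq m]

/-- The Taylor polynomial of degree two of `(1 + E) ^ (-1 / 2)`. -/
noncomputable def invSqrtApprox (E : Matrix m m ℝ) : Matrix m m ℝ :=
  1 - (1 / 2 : ℝ) • E + (3 / 8 : ℝ) • E ^ 2

lemma transpose_invSqrtApprox {E : Matrix m m ℝ} (hE : Eᵀ = E) :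
    (invSqrtApprox E)ᵀ = invSqrtApprox E := by
  simp [invSqrtApprox, transpose_pow, hE]

lemma invSqrtApprox_mul_one_add_mul_invSqrtApprox (E : Matrix m m ℝ) :
    invSqrtApprox E * (1 + E) * invSqrtApprox E =
      1 + ((5 / 8 : ℝ) • E ^ 3 - (15 / 64 : ℝ) • E ^ 4 + (9 / 64 : ℝ) • E ^ 5) := by
  rw [invSqrtApprox]
  noncomm_ring
  module

lemma norm_invSqrtApprox_mul_le (E : Matrix m m ℝ) (U : Matrix m n ℝ) :
    ‖invSqrtApprox E * U‖ ≤ (1 + ‖E‖ / 2 + 3 / 8 * ‖E‖ ^ 2) * ‖U‖ := by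
  have hE2 : ‖E ^ 2 * U‖ ≤ ‖E‖ ^ 2 * ‖U‖ := by
    rw [sq, sq, Matrix.mul_assoc]
    exact (frobenius_norm_mul _ _).trans
      (by rw [mul_assoc]; gcongr; exact frobenius_norm_mul _ _)
  calc ‖invSqrtApprox E * U‖ = ‖U - (1 / 2 : ℝ) • (E * U) + (3 / 8 : ℝ) • (E ^ 2 * U)‖ := by
        rw [invSqrtApprox, Matrix.add_mul, Matrix.sub_mul, Matrix.one_mul, Matrix.smul_mul,
          Matrix.smul_mul]
    _ ≤ ‖U‖ + 1 / 2 * ‖E * U‖ + 3 / 8 * ‖E ^ 2 * U‖ := by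
        refine (norm_add_le _ _).trans (add_le_add ((norm_sub_le _ _).trans ?_) ?_) <;>
          simp [norm_smul]
    _ ≤ ‖U‖ + 1 / 2 * (‖E‖ * ‖U‖) + 3 / 8 * (‖E‖ ^ 2 * ‖U‖) := by
        gcongr
        exact frobenius_norm_mul _ _
    _ = (1 + ‖E‖ / 2 + 3 / 8 * ‖E‖ ^ 2) * ‖U‖ := by ring

lemma norm_invSqrtApprox_gram_sub_one_le {E : Matrix m m ℝ} (hE : ‖E‖ ≤ 1) :
    ‖invSqrtApprox E * (1 + E) * invSqrtApprox E - 1‖ ≤ ‖E‖ ^ 3 := by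
  rw [invSqrtApprox_mul_one_add_mul_invSqrtApprox, add_sub_cancel_left]
  calc _ ≤ 5 / 8 * ‖E ^ 3‖ + 15 / 64 * ‖E ^ 4‖ + 9 / 64 * ‖E ^ 5‖ := by
        refine (norm_add_le _ _).trans (add_le_add ((norm_sub_le _ _).trans ?_) ?_) <;>
          simp [norm_smul]
    _ ≤ 5 / 8 * ‖E‖ ^ 3 + 15 / 64 * ‖E‖ ^ 4 + 9 / 64 * ‖E‖ ^ 5 := by
        gcongr <;> exact norm_pow_le' E (by norm_num)
    _ ≤ ‖E‖ ^ 3 := by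
        have h0 := norm_nonneg E
        have h4 : ‖E‖ ^ 4 ≤ ‖E‖ ^ 3 := pow_le_pow_of_le_one h0 hE (by norm_num)
        have h5 : ‖E‖ ^ 5 ≤ ‖E‖ ^ 3 := pow_le_pow_of_le_one h0 hE (by norm_num)
        linarith

end InvSqrtApprox

lemma norm_gram_sub_smul_sub_one_le {m n : Type*} [Fintype m] [Fintype n] [DecidableEq n]
    (A G : Matrix m n ℝ) (η : ℝ) :
    ‖(A - η • G)ᵀ * (A - η • G) - 1‖ ≤ ‖Aᵀ * A - 1‖ + 2 * |η| * ‖Aᵀ * G‖ + η ^ 2 * ‖G‖ ^ 2 := by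
  have hexpand : (A - η • G)ᵀ * (A - η • G) - 1 =
      (Aᵀ * A - 1) - η • (Aᵀ * G) - η • (Aᵀ * G)ᵀ + η ^ 2 • (Gᵀ * G) := by
    simp only [transpose_sub, transpose_smul, transpose_mul, transpose_transpose, Matrix.sub_mul,
      Matrix.mul_sub, Matrix.smul_mul, Matrix.mul_smul]
    module
  rw [hexpand]
  calc _ ≤ ‖Aᵀ * A - 1‖ + |η| * ‖Aᵀ * G‖ + |η| * ‖(Aᵀ * G)ᵀ‖ + η ^ 2 * ‖Gᵀ * G‖ := by
        refine (norm_add_le _ _).trans (add_le_add ((norm_sub_le _ _).trans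
          (add_le_add ((norm_sub_le _ _).trans ?_) ?_)) ?_) <;> simp [norm_smul]
    _ ≤ _ := by
        rw [frobenius_norm_transpose]
        have := norm_transpose_mul_self_le G
        have := sq_nonneg η
        nlinarith

end Matrix

lemma cdMap_eq_mul_invSqrtApprox {n p : ℕ} (X : Matrix (Fin n) (Fin p) ℝ) :
    cdMap X = X * invSqrtApprox (Xᵀ * X - 1) := by
  rw [cdMap, invSqrtApprox, ← Matrix.mul_smul]
  congr 1
  set E := Xᵀ * X - 1
  rw [show Xᵀ * X = 1 + E by simp [E]]
  noncomm_ring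
  module

lemma transpose_cdMap_mul {n p q : ℕ} (X : Matrix (Fin n) (Fin p) ℝ)
    (G : Matrix (Fin n) (Fin q) ℝ) :
    (cdMap X)ᵀ * G = invSqrtApprox (Xᵀ * X - 1) * (Xᵀ * G) := by
  rw [cdMap_eq_mul_invSqrtApprox, transpose_mul, transpose_invSqrtApprox (by simp),
    Matrix.mul_assoc]

lemma transpose_cdMap_mul_cdMap {n p : ℕ} (X : Matrix (Fin n) (Fin p) ℝ) :
    (cdMap X)ᵀ * cdMap X =
      invSqrtApprox (Xᵀ * X - 1) * (1 + (Xᵀ * X - 1)) * invSqrtApprox (Xᵀ * X - 1) := by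
  rw [transpose_cdMap_mul, cdMap_eq_mul_invSqrtApprox, add_sub_cancel]
  simp only [Matrix.mul_assoc]

lemma norm_transpose_cdMap_mul_cdMap_sub_one_le {n p : ℕ} {X : Matrix (Fin n) (Fin p) ℝ}
    (hX : ‖Xᵀ * X - 1‖ ≤ 1) :
    ‖(cdMap X)ᵀ * cdMap X - 1‖ ≤ ‖Xᵀ * X - 1‖ ^ 3 := by
  rw [transpose_cdMap_mul_cdMap]
  exact norm_invSqrtApprox_gram_sub_one_le hX

lemma norm_transpose_cdMap_mul_le {n p q : ℕ} {X : Matrix (Fin n) (Fin p) ℝ}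
    (hX : ‖Xᵀ * X - 1‖ ≤ 1 / 6) (G : Matrix (Fin n) (Fin q) ℝ) :
    ‖(cdMap X)ᵀ * G‖ ≤ 455 / 384 * ‖G‖ := by
  have hε := norm_nonneg (Xᵀ * X - 1)
  have hXG : ‖Xᵀ * G‖ ≤ 13 / 12 * ‖G‖ := by
    refine (pow_le_pow_iff_left₀ (norm_nonneg _) (by positivity) two_ne_zero).mp ?_
    calc ‖Xᵀ * G‖ ^ 2 ≤ (1 + ‖Xᵀ * X - 1‖) * ‖G‖ ^ 2 := norm_transpose_mul_sq_le X G
      _ ≤ (13 / 12 * ‖G‖) ^ 2 := by nlinarith [sq_nonneg ‖G‖]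
  calc ‖(cdMap X)ᵀ * G‖
      ≤ (1 + ‖Xᵀ * X - 1‖ / 2 + 3 / 8 * ‖Xᵀ * X - 1‖ ^ 2) * ‖Xᵀ * G‖ := by
        rw [transpose_cdMap_mul]
        exact norm_invSqrtApprox_mul_le _ _
    _ ≤ 35 / 32 * (13 / 12 * ‖G‖) := by
        gcongr
        nlinarith
    _ = 455 / 384 * ‖G‖ := by ring

theorem stmt_17 {n p : ℕ} (X G : Matrix (Fin n) (Fin p) ℝ) (η M : ℝ)
    (hfeas : frob (Xᵀ * X - 1) ≤ 1 / 6)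
    (hG : frob G ≤ M) (hη : 0 < η) (hη' : η ≤ 1 / (19 * M)) :
    frob ((cdMap X - η • G)ᵀ * (cdMap X - η • G) - 1) ≤
        (1 / 36) * frob (Xᵀ * X - 1) + 3 * η * M ∧
      frob ((cdMap X - η • G)ᵀ * (cdMap X - η • G) - 1) ≤ 1 / 6 := by
  simp only [frob_eq_norm] at hfeas hG ⊢
  set ε := ‖Xᵀ * X - 1‖
  have hε : 0 ≤ ε := norm_nonneg _
  have hM : 0 < M := by
    by_contra! hM
    have : 1 / (19 * M) ≤ 0 := div_nonpos_of_nonneg_of_nonpos zero_le_one (by linarith)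
    linarith
  have hηM : η * M ≤ 1 / 19 := by
    rw [le_div_iff₀ (by positivity)] at hη'
    linarith
  have hstep : ‖(cdMap X - η • G)ᵀ * (cdMap X - η • G) - 1‖ ≤ 1 / 36 * ε + 3 * η * M :=
    calc _ ≤ ‖(cdMap X)ᵀ * cdMap X - 1‖ + 2 * |η| * ‖(cdMap X)ᵀ * G‖ + η ^ 2 * ‖G‖ ^ 2 :=
          norm_gram_sub_smul_sub_one_le _ _ _
      _ ≤ ε ^ 3 + 2 * η * (455 / 384 * M) + η ^ 2 * M ^ 2 := by
          rw [abs_of_pos hη]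
          gcongr
          · exact norm_transpose_cdMap_mul_cdMap_sub_one_le (hfeas.trans (by norm_num))
          · exact (norm_transpose_cdMap_mul_le hfeas G).trans (by gcongr)
      _ ≤ 1 / 36 * ε + 3 * η * M := by
          have : ε ^ 2 ≤ 1 / 36 := by nlinarith
          nlinarith [mul_pos hη hM]
  exact ⟨hstep, by nlinarith⟩
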